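/- Let X₁,…,X_M, X, Y be i.i.d. from a continuous density f on ℝ^d, and let ê_u(Z) = f̂_u(Z) - E[f̂_u(Z)|Z] be the centered uniform-kernel density estimation error with kernel volume V_u = k/M. If the kernel balls at X and Y are disjoint (i.e. ‖X-Y‖ ≥ 2(k/(c_d M))^{1/d}), then Cov[ê_u(X), ê_u(Y) | X, Y] = -f(X)f(Y)/M + o(1/M). -/

import Mathlib

open MeasureTheory ProbabilityTheory Filter Asymptotics
open scoped Classical

open Metric Topology Finset

/-! The kernel counts `N_x`, `N_y` are sums of indicators of events about i.i.d. samples. Distinct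
samples are independent, and a single sample almost surely does not lie in both kernel balls,
whose intersection is contained in a sphere; hence `Cov[N_x, N_y] = -M p_x p_y` exactly, where
`p_z` is the probability of the ball at `z`. After dividing by `k²`,
`M Cov[ê(x), ê(y)] = -(p_x / V) (p_y / V)` with `V = k/M` the volume of each ball, and `p_z / V`
tends to `f z` by continuity of `f`, since the radius tends to `0`. -/

section Covariance

variable {Ω : Type*} [MeasurableSpace Ω] {μ : Measure Ω} [IsProbabilityMeasure μ]

lemma memLp_indicator_one {A : Set Ω} (hA : MeasurableSet A) :
    MemLp (A.indicator (1 : Ω → ℝ)) 2 μ :=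
  memLp_indicator_const 2 hA (1 : ℝ) (.inr (measure_ne_top μ A))

lemma covariance_indicator_one {A B : Set Ω} (hA : MeasurableSet A) (hB : MeasurableSet B) :
    cov[A.indicator 1, B.indicator 1; μ] = μ.real (A ∩ B) - μ.real A * μ.real B := by
  rw [covariance_eq_sub (memLp_indicator_one hA) (memLp_indicator_one hB),
    ← Set.inter_indicator_one, integral_indicator_one (hA.inter hB), integral_indicator_one hA,
    integral_indicator_one hB]

lemma covariance_card_filter_mem {α ι : Type*} [MeasurableSpace α] {X : ι → Ω → α}
    (hXm : ∀ i, Measurable (X i)) (hindep : iIndepFun X μ) {ν : Measure α}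
    (hlaw : ∀ i, μ.map (X i) = ν) {s t : Set α} (hs : MeasurableSet s) (ht : MeasurableSet t)
    (hst : ν (s ∩ t) = 0) (I : Finset ι) :
    cov[fun ω => (#{i ∈ I | X i ω ∈ s} : ℝ), fun ω => (#{i ∈ I | X i ω ∈ t} : ℝ); μ]
      = -#I * ν.real s * ν.real t := by
  have hpre : ∀ i (u : Set α), MeasurableSet u → μ (X i ⁻¹' u) = ν u := fun i u hu => by
    rw [← Measure.map_apply (hXm i) hu, hlaw i]
  have hcount : ∀ (u : Set α) ω, (#{i ∈ I | X i ω ∈ u} : ℝ)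
      = ∑ i ∈ I, (X i ⁻¹' u).indicator 1 ω := fun u ω => by
    simp only [natCast_card_filter, Set.indicator_apply, Set.mem_preimage, Pi.one_apply]
  have hterm : ∀ i j, cov[(X i ⁻¹' s).indicator 1, (X j ⁻¹' t).indicator 1; μ]
      = if i = j then -(ν.real s * ν.real t) else 0 := fun i j => by
    rw [covariance_indicator_one (hXm i hs) (hXm j ht)]
    split_ifs with hij
    · subst hij
      simp [measureReal_def, ← Set.preimage_inter, hpre i _ (hs.inter ht), hst, hpre i _ hs,
        hpre i _ ht]
    · simp [measureReal_def, (hindep.indepFun hij).measure_inter_preimage_eq_mul _ _ hs ht,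
        hpre i _ hs, hpre j _ ht]
  simp_rw [hcount]
  rw [covariance_fun_sum_fun_sum' (fun i _ => memLp_indicator_one (hXm i hs))
    (fun i _ => memLp_indicator_one (hXm i ht))]
  simp only [hterm, sum_ite_eq, sum_ite_mem, inter_self, sum_neg_distrib, sum_const, nsmul_eq_mul,
    neg_mul, neg_inj]
  ring

end Covariance

lemma measureReal_withDensity_ofReal {α : Type*} [MeasurableSpace α] {μ : Measure α}
    {f : α → ℝ} {s : Set α} (hs : MeasurableSet s) (hfs : IntegrableOn f s μ)
    (hf : ∀ x, 0 ≤ f x) :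
    (μ.withDensity fun x => ENNReal.ofReal (f x)).real s = ∫ x in s, f x ∂μ := by
  rw [measureReal_def, withDensity_apply _ hs,
    ← ofReal_integral_eq_lintegral_ofReal hfs (.of_forall hf),
    ENNReal.toReal_ofReal (integral_nonneg hf)]

lemma tendsto_withDensity_closedBall_div {E ι : Type*} [MetricSpace E] [ProperSpace E]
    [MeasurableSpace E] [OpensMeasurableSpace E] [SecondCountableTopology E] {μ : Measure E}
    [IsFiniteMeasureOnCompacts μ] {f : E → ℝ} (hf : Continuous f) (hf0 : ∀ x, 0 ≤ f x) (z : E)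
    {l : Filter ι} {r : ι → ℝ} (hr : Tendsto r l (𝓝 0))
    (hpos : ∀ᶠ i in l, μ.real (closedBall z (r i)) ≠ 0) :
    Tendsto (fun i => (μ.withDensity fun x => ENNReal.ofReal (f x)).real (closedBall z (r i))
      / μ.real (closedBall z (r i))) l (𝓝 (f z)) := by
  have hlin := hf.continuousAt.integral_sub_linear_isLittleO_ae
    (hf.stronglyMeasurableAtFilter μ _) ((tendsto_closedBall_smallSets z).comp hr)
  have hlim := hlin.tendsto_div_nhds_zero.add_const (f z)
  rw [zero_add] at hlim
  refine hlim.congr' (hpos.mono fun i hi => ?_)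
  simp only [Function.comp_apply, smul_eq_mul]
  rw [measureReal_withDensity_ofReal measurableSet_closedBall
    (hf.continuousOn.integrableOn_compact (isCompact_closedBall z _)) hf0]
  field_simp
  ring

lemma addHaar_closedBall_inter_closedBall_eq_zero {E : Type*} [NormedAddCommGroup E]
    [NormedSpace ℝ E] [MeasurableSpace E] [BorelSpace E] [FiniteDimensional ℝ E] [Nontrivial E]
    (μ : Measure E) [μ.IsAddHaarMeasure] {x y : E} {r : ℝ} (h : 2 * r ≤ dist x y) :
    μ (closedBall x r ∩ closedBall y r) = 0 := by
  refine measure_mono_null (fun u ⟨hux, huy⟩ => ?_) (μ.addHaar_sphere x r)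
  rw [mem_closedBall] at hux huy
  have := dist_triangle_left x y u
  exact mem_sphere.2 (by linarith)

lemma volume_real_closedBall_rpow {d : ℕ} (hd : d ≠ 0) (z : EuclideanSpace ℝ (Fin d)) {v : ℝ}
    (hv : 0 ≤ v) :
    volume.real (closedBall z ((v / volume.real (ball (0 : EuclideanSpace ℝ (Fin d)) 1))
      ^ (1 / (d : ℝ)))) = v := by
  have : Nontrivial (EuclideanSpace ℝ (Fin d)) :=
    Module.nontrivial_of_finrank_pos (R := ℝ) (by simp [Nat.pos_of_ne_zero hd])
  have hc : volume.real (ball (0 : EuclideanSpace ℝ (Fin d)) 1) ≠ 0 :=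
    (ENNReal.toReal_pos (measure_ball_pos _ _ one_pos).ne' measure_ball_lt_top.ne).ne'
  rw [Measure.addHaar_real_closedBall _ _ (by positivity), finrank_euclideanSpace_fin, one_div,
    Real.rpow_inv_natCast_pow (by positivity) hd, div_mul_cancel₀ _ hc]

theorem stmt6_general (d : ℕ) (hd : 0 < d)
    {Ω : Type*} [MeasurableSpace Ω] (μ : Measure Ω) [IsProbabilityMeasure μ]
    (X : ℕ → Ω → EuclideanSpace ℝ (Fin d))
    (hXm : ∀ i, Measurable (X i))
    (hindep : iIndepFun X μ)
    (f : EuclideanSpace ℝ (Fin d) → ℝ)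
    (hf_cont : Continuous f) (hf_nonneg : ∀ z, 0 ≤ f z)
    (hlaw : ∀ i, Measure.map (X i) μ
      = volume.withDensity (fun z => ENNReal.ofReal (f z)))
    (k : ℕ → ℕ)
    (hk : Tendsto (fun M => (k M : ℝ)) atTop atTop)
    (hkM : Tendsto (fun M => (k M : ℝ) / M) atTop (nhds 0))
    (x y : EuclideanSpace ℝ (Fin d)) :
    let cd : ℝ := (volume (Metric.ball (0 : EuclideanSpace ℝ (Fin d)) 1)).toReal
    let r : ℕ → ℝ := fun M => ((k M : ℝ) / (cd * M)) ^ (1 / (d:ℝ))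
    let fhat : ℕ → EuclideanSpace ℝ (Fin d) → Ω → ℝ := fun M z ω =>
      (((Finset.range M).filter (fun i => X i ω ∈ Metric.closedBall z (r M))).card : ℝ) / k M
    let ehat : ℕ → EuclideanSpace ℝ (Fin d) → Ω → ℝ := fun M z ω =>
      fhat M z ω - ∫ ω', fhat M z ω' ∂μ
    (∀ M, 2 * r M ≤ dist x y) →
    (fun M => (∫ ω, ehat M x ω * ehat M y ω ∂μ) + f x * f y / M)
      =o[atTop] (fun M => 1 / (M:ℝ)) := by
  intro cd r fhat ehat hdist
  have : Nontrivial (EuclideanSpace ℝ (Fin d)) :=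
    Module.nontrivial_of_finrank_pos (R := ℝ) (by simpa using hd)
  set ν := volume.withDensity fun z => ENNReal.ofReal (f z)
  have hr_eq : r = fun M => ((k M / M : ℝ) / cd) ^ (1 / (d : ℝ)) := by
    ext M; simp only [r, div_div, mul_comm]
  have hvol : ∀ z M, volume.real (closedBall z (r M)) = k M / M := fun z M => by
    rw [hr_eq]
    exact volume_real_closedBall_rpow hd.ne' z (v := k M / M) (by positivity)
  have hr : Tendsto r atTop (𝓝 0) := by
    rw [hr_eq]
    simpa [hd.ne'] using (hkM.div_const cd).rpow_const (.inr (by positivity : (0 : ℝ) ≤ 1 / d))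
  have hcov : ∀ M, ∫ ω, ehat M x ω * ehat M y ω ∂μ
      = -M * ν.real (closedBall x (r M)) * ν.real (closedBall y (r M)) / k M ^ 2 := fun M => by
    change cov[fhat M x, fhat M y; μ] = _
    have hdisj : ν (closedBall x (r M) ∩ closedBall y (r M)) = 0 :=
      withDensity_absolutelyContinuous _ _ (addHaar_closedBall_inter_closedBall_eq_zero _ (hdist M))
    rw [covariance_fun_div_left, covariance_fun_div_right, covariance_card_filter_mem hXm hindep
      hlaw measurableSet_closedBall measurableSet_closedBall hdisj, card_range]
    ring
  have hdens : ∀ z, Tendsto (fun M => ν.real (closedBall z (r M)) / (k M / M)) atTop (𝓝 (f z)) :=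
    fun z => by
      have hpos : ∀ᶠ M in atTop, volume.real (closedBall z (r M)) ≠ 0 := by
        filter_upwards [eventually_gt_atTop 0, hk.eventually_gt_atTop 0] with M hM hkpos
        rw [hvol]
        positivity
      refine (tendsto_withDensity_closedBall_div hf_cont hf_nonneg z hr hpos).congr fun M => ?_
      rw [hvol]
  rw [isLittleO_iff_tendsto' ((eventually_gt_atTop 0).mono fun M hM h => by simp_all)]
  have hlim := ((hdens x).mul (hdens y)).neg.add_const (f x * f y)
  rw [neg_add_cancel] at hlim
  refine hlim.congr' ?_
  filter_upwards [eventually_gt_atTop 0, hk.eventually_gt_atTop 0] with M hM hkpos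
  rw [hcov]
  field_simp

/-- Let `X₁, X₂, …` be i.i.d. samples from a continuous density `f` on `ℝᵈ`, and for each
sample size `M` let `ê_u(z)` be the centered uniform-kernel density estimation error with
kernel volume `k(M)/M` (so kernel radius `r(M) = (k/(c_d M))^{1/d}`).  If the kernel balls at
the fixed points `x` and `y` are disjoint (`dist x y ≥ 2 r(M)`), then
`Cov[ê_u(x), ê_u(y)] = -f(x)f(y)/M + o(1/M)`. -/
theorem stmt6 (d : ℕ) (hd : 0 < d)
    {Ω : Type*} [MeasurableSpace Ω] (μ : Measure Ω) [IsProbabilityMeasure μ]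
    (X : ℕ → Ω → EuclideanSpace ℝ (Fin d))
    (hXm : ∀ i, Measurable (X i))
    (hindep : iIndepFun X μ)
    (f : EuclideanSpace ℝ (Fin d) → ℝ)
    (hf_cont : Continuous f) (hf_nonneg : ∀ z, 0 ≤ f z)
    (hf_int : ∫ z, f z = 1)
    (hlaw : ∀ i, Measure.map (X i) μ
      = volume.withDensity (fun z => ENNReal.ofReal (f z)))
    (k : ℕ → ℕ)
    (hk : Tendsto (fun M => (k M : ℝ)) atTop atTop)
    (hkM : Tendsto (fun M => (k M : ℝ) / M) atTop (nhds 0))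
    (x y : EuclideanSpace ℝ (Fin d)) :
    let cd : ℝ := (volume (Metric.ball (0 : EuclideanSpace ℝ (Fin d)) 1)).toReal
    let r : ℕ → ℝ := fun M => ((k M : ℝ) / (cd * M)) ^ (1 / (d:ℝ))
    let fhat : ℕ → EuclideanSpace ℝ (Fin d) → Ω → ℝ := fun M z ω =>
      (((Finset.range M).filter (fun i => X i ω ∈ Metric.closedBall z (r M))).card : ℝ) / k M
    let ehat : ℕ → EuclideanSpace ℝ (Fin d) → Ω → ℝ := fun M z ω =>
      fhat M z ω - ∫ ω', fhat M z ω' ∂μ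
    (∀ M, 2 * r M ≤ dist x y) →
    (fun M => (∫ ω, ehat M x ω * ehat M y ω ∂μ) + f x * f y / M)
      =o[atTop] (fun M => 1 / (M:ℝ)) :=
  stmt6_general d hd μ X hXm hindep f hf_cont hf_nonneg hlaw k hk hkM x y
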